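/- For all positive integers n, m, r with n ≥ m and every real (or polynomial variable) y, C(m+r,m) · ∑_{k=m}^{n} C(n+r,k+r)·B_{n−k}^{(r)}·w̃_{k+r,m+r}(y) = C(n+r,r)·y^r·w̃_{n,m}(y) (an identity of rational-coefficient polynomials in y). In particular, for r = 1: m · ∑_{k=m}^{n} C(n,k)·B_{n−k}·w̃_{k,m}(y) = n·y·w̃_{n−1,m−1}(y), where B_j are the classical Bernoulli numbers (with B_1 = −1/2). -/

import Mathlib

/-- Stirling numbers of the second kind. -/
def stirling2 : ℕ → ℕ → ℕ
  | 0, 0 => 1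
  | 0, _ + 1 => 0
  | _ + 1, 0 => 0
  | n + 1, k + 1 => (k + 1) * stirling2 n (k + 1) + stirling2 n k

/-- Derangement numbers `d_n = n! ∑_{i=0}^n (-1)^i / i!`. -/
noncomputable def derang (n : ℕ) : ℝ :=
  (n.factorial : ℝ) * ∑ i ∈ Finset.range (n + 1), (-1 : ℝ) ^ i / (i.factorial : ℝ)

/-- Partial derangement numbers `d_{n,r}`. -/
noncomputable def pderang (n r : ℕ) : ℝ :=
  if r ≤ n then (n.choose r : ℝ) * derang (n - r) else 0

/-- Partial deranged Bell polynomials `w̃_{n,r}(y)`. -/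
noncomputable def pdbPoly (n r : ℕ) (y : ℝ) : ℝ :=
  ∑ k ∈ Finset.range (n + 1), (stirling2 n k : ℝ) * pderang k r * y ^ k

/-- Higher-order Bernoulli numbers `B_n^{(r)}`, with `bernoulli 1 = -1/2`. -/
def bernHigher : ℕ → ℕ → ℚ
  | 0, n => if n = 0 then 1 else 0
  | r + 1, n =>
      ∑ k ∈ Finset.range (n + 1), (n.choose k : ℚ) * bernoulli k * bernHigher r (n - k)

/-!
Multiplying `(X / (exp X - 1)) ^ r = ∑ B_n^{(r)} X^n / n!` by the Stirling generating function
`(exp X - 1) ^ (k + r) / (k + r)!` gives `X ^ r (exp X - 1) ^ k / (k + r)!`; comparing coefficients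
of `X ^ (n + r)` yields
`C(k+r,r) ∑_l C(n+r,l) S(l,k+r) B_{n+r-l}^{(r)} = C(n+r,r) S(n,k)`.
Expanding `w̃_{k+r,m+r}` into Stirling numbers, exchanging the sums and using
`C(m+r,m) d_{i+r,m+r} = C(i+r,r) d_{i,m}` turns the left side into `C(n+r,r) y^r w̃_{n,m}(y)`.
The case `r = 1` is the second identity, since `B^{(1)} = B`.
-/

open Finset PowerSeries
open scoped Nat

theorem stirling2_eq_stirlingSecond : stirling2 = Nat.stirlingSecond := by
  funext n k
  induction n generalizing k with
  | zero => cases k <;> rfl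
  | succ n ih => cases k <;> simp [stirling2, Nat.stirlingSecond_succ_succ, ih]

namespace PowerSeries

noncomputable def egf (a : ℕ → ℚ) : ℚ⟦X⟧ :=
  mk fun n => a n / n !

@[simp]
theorem coeff_egf (a : ℕ → ℚ) (n : ℕ) : coeff n (egf a) = a n / n ! :=
  coeff_mk _ _

theorem egf_mul_egf (a b : ℕ → ℚ) :
    egf a * egf b = egf fun n => ∑ l ∈ range (n + 1), (n.choose l : ℚ) * a l * b (n - l) := by
  ext n
  rw [coeff_mul, Nat.sum_antidiagonal_eq_sum_range_succ_mk, coeff_egf, sum_div]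
  refine sum_congr rfl fun l hl => ?_
  rw [coeff_egf, coeff_egf, Nat.cast_choose ℚ (Nat.lt_succ_iff.mp (mem_range.mp hl))]
  field_simp

theorem egf_injective : Function.Injective egf := fun a b h => funext fun n => by
  simpa [Nat.factorial_ne_zero] using congrArg (coeff n) h

theorem derivative_egf (a : ℕ → ℚ) : d⁄dX ℚ (egf a) = egf fun n => a (n + 1) := by
  ext n
  rw [coeff_derivative, coeff_egf, coeff_egf, Nat.factorial_succ]
  push_cast
  field_simp

theorem eq_zero_of_derivative_eq_C_mul_self {R : Type*} [CommRing R] [IsAddTorsionFree R]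
    {f : R⟦X⟧} {c : R} (hf : d⁄dX R f = C c * f) (h0 : constantCoeff f = 0) : f = 0 := by
  ext n
  induction n with
  | zero => simpa using h0
  | succ n ih =>
    have h := congrArg (coeff n) hf
    rw [coeff_derivative, coeff_C_mul, ih, map_zero, mul_zero, ← Nat.cast_succ, mul_comm,
      ← nsmul_eq_mul] at h
    exact (smul_eq_zero.mp h).resolve_left n.succ_ne_zero

/-- Both sides satisfy `f' = (k + 1) f + (k + 1) (exp X - 1) ^ k` and vanish at `0`. -/
theorem exp_sub_one_pow (k : ℕ) :
    (exp ℚ - 1) ^ k = C (k ! : ℚ) * egf fun n => (n.stirlingSecond k : ℚ) := by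
  induction k with
  | zero => ext n; cases n <;> simp [coeff_one]
  | succ k ih =>
    have hS : d⁄dX ℚ (egf fun n => (n.stirlingSecond (k + 1) : ℚ)) =
        C (k + 1 : ℚ) * (egf fun n => (n.stirlingSecond (k + 1) : ℚ)) +
          egf fun n => (n.stirlingSecond k : ℚ) := by
      ext n
      rw [derivative_egf, map_add, coeff_C_mul, coeff_egf, coeff_egf, coeff_egf,
        Nat.stirlingSecond_succ_succ]
      push_cast
      ring
    rw [← sub_eq_zero]
    refine eq_zero_of_derivative_eq_C_mul_self (c := k + 1) ?_
      (by rw [← coeff_zero_eq_constantCoeff_apply, map_sub, coeff_C_mul, coeff_egf]; simp)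
    rw [map_sub, derivative_pow, Nat.add_sub_cancel, map_sub, derivative_exp, derivative_one,
      sub_zero, Derivation.leibniz, derivative_C, smul_zero, add_zero, smul_eq_mul, hS, pow_succ,
      ih, Nat.factorial_succ]
    simp only [Nat.cast_mul, Nat.cast_succ, map_mul, map_add, map_natCast, map_one]
    ring

theorem bernoulliPowerSeries_eq_egf : bernoulliPowerSeries ℚ = egf bernoulli := rfl

theorem bernoulliPowerSeries_pow (r : ℕ) : bernoulliPowerSeries ℚ ^ r = egf (bernHigher r) := by
  induction r with
  | zero => ext n; cases n <;> simp [bernHigher, coeff_one]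
  | succ r ih => rw [pow_succ', ih, bernoulliPowerSeries_eq_egf, egf_mul_egf]; rfl

end PowerSeries

theorem bernHigher_one : bernHigher 1 = bernoulli :=
  egf_injective (by rw [← bernoulliPowerSeries_pow, pow_one, bernoulliPowerSeries_eq_egf])

theorem choose_mul_sum_choose_mul_stirlingSecond_mul_bernHigher (n k r : ℕ) :
    ((k + r).choose r : ℚ) * ∑ l ∈ range (n + r + 1),
        ((n + r).choose l : ℚ) * l.stirlingSecond (k + r) * bernHigher r (n + r - l) =
      ((n + r).choose r : ℚ) * n.stirlingSecond k := by
  have h : (exp ℚ - 1) ^ (k + r) * bernoulliPowerSeries ℚ ^ r = X ^ r * (exp ℚ - 1) ^ k := by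
    rw [pow_add, ← bernoulliPowerSeries_mul_exp_sub_one, mul_pow]
    ring
  have hcoeff := congrArg (coeff (n + r)) h
  rw [exp_sub_one_pow, exp_sub_one_pow, bernoulliPowerSeries_pow, mul_assoc, egf_mul_egf,
    coeff_C_mul, coeff_egf, coeff_X_pow_mul, coeff_C_mul, coeff_egf] at hcoeff
  rw [← Nat.choose_symm_add, ← Nat.choose_symm_add, Nat.cast_add_choose, Nat.cast_add_choose]
  field_simp at hcoeff ⊢
  linear_combination hcoeff

theorem Finset.sum_range_eq_sum_range_add_right_of_eq_zero {M : Type*} [AddCommMonoid M]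
    {f : ℕ → M} {r : ℕ} (hf : ∀ j < r, f j = 0) (n : ℕ) :
    ∑ j ∈ range (n + r + 1), f j = ∑ i ∈ range (n + 1), f (i + r) := by
  rw [show n + r + 1 = r + (n + 1) by omega, sum_range_add,
    sum_eq_zero fun j hj => hf j (mem_range.mp hj), zero_add]
  simp only [add_comm r]

theorem Finset.sum_Icc_eq_sum_range_of_eq_zero {M : Type*} [AddCommMonoid M] {f : ℕ → M}
    {m : ℕ} (hf : ∀ j < m, f j = 0) (n : ℕ) :
    ∑ j ∈ Icc m n, f j = ∑ j ∈ range (n + 1), f j :=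
  sum_subset (fun j hj => by simp only [mem_Icc, mem_range] at *; omega) fun j hj hj' =>
    hf j (by simp only [mem_Icc, mem_range] at hj hj'; omega)

theorem pderang_eq_zero_of_lt {n r : ℕ} (h : n < r) : pderang n r = 0 :=
  if_neg (by omega)

theorem choose_mul_pderang_add_add (i m r : ℕ) :
    ((m + r).choose m : ℝ) * pderang (i + r) (m + r) =
      ((i + r).choose r : ℝ) * pderang i m := by
  rcases lt_or_ge i m with h | h
  · rw [pderang_eq_zero_of_lt h, pderang_eq_zero_of_lt (by omega), mul_zero, mul_zero]
  have hchoose := Nat.choose_mul (n := i + r) (k := m + r) (s := r) le_add_self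
  rw [Nat.add_sub_cancel, Nat.add_sub_cancel] at hchoose
  rw [pderang, pderang, if_pos (by omega), if_pos h, Nat.add_sub_add_right, ← mul_assoc,
    ← mul_assoc, Nat.choose_symm_add, mul_comm ((m + r).choose r : ℝ), ← Nat.cast_mul,
    hchoose, Nat.cast_mul]

theorem pdbPoly_eq_sum_range {n N : ℕ} (h : n ≤ N) (m : ℕ) (y : ℝ) :
    pdbPoly n m y =
      ∑ j ∈ range (N + 1), (n.stirlingSecond j : ℝ) * pderang j m * y ^ j := by
  rw [pdbPoly, stirling2_eq_stirlingSecond]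
  refine sum_subset (range_subset_range.mpr (by omega)) fun j hj hj' => ?_
  rw [Nat.stirlingSecond_eq_zero_of_lt (by simp only [mem_range] at hj'; omega)]
  simp

theorem pdbPoly_eq_zero_of_lt {n m : ℕ} (h : n < m) (y : ℝ) : pdbPoly n m y = 0 :=
  sum_eq_zero fun j hj => by
    rw [pderang_eq_zero_of_lt (by simp only [mem_range] at hj; omega)]
    simp

theorem choose_mul_sum_choose_mul_bernHigher_mul_pdbPoly (n m r : ℕ) (y : ℝ) :
    ((m + r).choose m : ℝ) * ∑ k ∈ Icc m n,
        ((n + r).choose (k + r) : ℝ) * ((bernHigher r (n - k) : ℚ) : ℝ) *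
          pdbPoly (k + r) (m + r) y =
      ((n + r).choose r : ℝ) * y ^ r * pdbPoly n m y := by
  set T : ℕ → ℝ := fun j => ∑ l ∈ range (n + r + 1),
    ((n + r).choose l : ℝ) * l.stirlingSecond j * ((bernHigher r (n + r - l) : ℚ) : ℝ)
  have hT (i : ℕ) :
      ((i + r).choose r : ℝ) * T (i + r) = ((n + r).choose r : ℝ) * n.stirlingSecond i := by
    have h := congrArg (Rat.cast : ℚ → ℝ)
      (choose_mul_sum_choose_mul_stirlingSecond_mul_bernHigher n i r)
    push_cast at h
    exact h
  have hreindex : ∑ k ∈ Icc m n,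
        ((n + r).choose (k + r) : ℝ) * ((bernHigher r (n - k) : ℚ) : ℝ) *
          pdbPoly (k + r) (m + r) y =
      ∑ l ∈ range (n + r + 1),
        ((n + r).choose l : ℝ) * ((bernHigher r (n + r - l) : ℚ) : ℝ) *
          pdbPoly l (m + r) y := by
    rw [sum_range_eq_sum_range_add_right_of_eq_zero
        (fun j hj => by rw [pdbPoly_eq_zero_of_lt (by omega), mul_zero]),
      sum_Icc_eq_sum_range_of_eq_zero
        (fun j hj => by rw [pdbPoly_eq_zero_of_lt (by omega), mul_zero])]
    simp only [Nat.add_sub_add_right]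
  have hswap : ∑ l ∈ range (n + r + 1),
        ((n + r).choose l : ℝ) * ((bernHigher r (n + r - l) : ℚ) : ℝ) * pdbPoly l (m + r) y =
      ∑ j ∈ range (n + r + 1), pderang j (m + r) * y ^ j * T j := by
    rw [sum_congr rfl fun l hl => by
      rw [pdbPoly_eq_sum_range (Nat.lt_succ_iff.mp (mem_range.mp hl)), mul_sum], sum_comm]
    refine sum_congr rfl fun j _ => ?_
    rw [mul_sum]
    exact sum_congr rfl fun l _ => by ring
  rw [hreindex, hswap, sum_range_eq_sum_range_add_right_of_eq_zero
      (fun j hj => by rw [pderang_eq_zero_of_lt (by omega), zero_mul, zero_mul]),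
    pdbPoly_eq_sum_range le_rfl, mul_sum, mul_sum]
  refine sum_congr rfl fun i _ => ?_
  rw [pow_add]
  linear_combination (y ^ i * y ^ r * T (i + r)) * choose_mul_pderang_add_add i m r +
    (pderang i m * y ^ i * y ^ r) * hT i

theorem mul_sum_choose_mul_bernoulli_mul_pdbPoly (n : ℕ) {m : ℕ} (hm : 0 < m) (y : ℝ) :
    (m : ℝ) * ∑ k ∈ Icc m n,
        (n.choose k : ℝ) * ((bernoulli (n - k) : ℚ) : ℝ) * pdbPoly k m y =
      (n : ℝ) * y * pdbPoly (n - 1) (m - 1) y := by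
  obtain ⟨m, rfl⟩ : ∃ m', m = m' + 1 := ⟨m - 1, by omega⟩
  rcases n with _ | n
  · simp
  have h := choose_mul_sum_choose_mul_bernHigher_mul_pdbPoly n m 1 y
  rw [← map_add_right_Icc, sum_map]
  simpa [bernHigher_one] using h

theorem choose_mul_sum_bernHigher_mul_pdbPoly_general (n m r : ℕ)
    (hm : 0 < m) (y : ℝ) :
    (((m + r).choose m : ℝ) * ∑ k ∈ Finset.Icc m n,
        ((n + r).choose (k + r) : ℝ) * ((bernHigher r (n - k) : ℚ) : ℝ) *
          pdbPoly (k + r) (m + r) y =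
      ((n + r).choose r : ℝ) * y ^ r * pdbPoly n m y) ∧
    ((m : ℝ) * ∑ k ∈ Finset.Icc m n,
        (n.choose k : ℝ) * ((bernoulli (n - k) : ℚ) : ℝ) * pdbPoly k m y =
      (n : ℝ) * y * pdbPoly (n - 1) (m - 1) y) :=
  ⟨choose_mul_sum_choose_mul_bernHigher_mul_pdbPoly n m r y,
    mul_sum_choose_mul_bernoulli_mul_pdbPoly n hm y⟩

/-- For `n ≥ m ≥ 1` and `r ≥ 1`,
`C(m+r,m) ∑_{k=m}^n C(n+r,k+r) B_{n-k}^{(r)} w̃_{k+r,m+r}(y) = C(n+r,r) y^r w̃_{n,m}(y)`;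
in particular for `r = 1`,
`m ∑_{k=m}^n C(n,k) B_{n-k} w̃_{k,m}(y) = n y w̃_{n-1,m-1}(y)`. -/
theorem choose_mul_sum_bernHigher_mul_pdbPoly (n m r : ℕ)
    (hn : 0 < n) (hm : 0 < m) (hr : 0 < r) (hmn : m ≤ n) (y : ℝ) :
    (((m + r).choose m : ℝ) * ∑ k ∈ Finset.Icc m n,
        ((n + r).choose (k + r) : ℝ) * ((bernHigher r (n - k) : ℚ) : ℝ) *
          pdbPoly (k + r) (m + r) y =
      ((n + r).choose r : ℝ) * y ^ r * pdbPoly n m y) ∧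
    ((m : ℝ) * ∑ k ∈ Finset.Icc m n,
        (n.choose k : ℝ) * ((bernoulli (n - k) : ℚ) : ℝ) * pdbPoly k m y =
      (n : ℝ) * y * pdbPoly (n - 1) (m - 1) y) :=
  choose_mul_sum_bernHigher_mul_pdbPoly_general n m r hm y
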